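/- For O ∈ O(3) let σ_O : (ℝ³)³ → (ℝ³)³ be right multiplication, (σ_O(a))_j = Σᵢ Oᵢⱼ aᵢ. Then: (i) Φ(σ_O(a)) = det(O)·Φ(a) for all a ∈ (ℝ³)³, where Φ(a₁,a₂,a₃) = ⟨a₁, a₂ × a₃⟩; and (ii) for every η with Φ(η) ≠ 0, σ_O maps the set N_η = {a : f(a) = f(η), sign Φ(a) = sign Φ(η)} bijectively onto N_{σ_O(η)} = {a : f(a) = f(σ_O(η)), sign Φ(a) = sign Φ(σ_O(η))}, where f(a₁,a₂,a₃) = (⟨a₁,a₂⟩, ⟨a₂,a₃⟩, ⟨a₃,a₁⟩, ‖a₁‖²−‖a₂‖², ‖a₂‖²−‖a₃‖²). -/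

import Mathlib

open scoped RealInnerProductSpace

noncomputable section

/-- `ℝ³` with the standard (Euclidean) inner product. -/
abbrev E3 : Type := EuclideanSpace ℝ (Fin 3)

/-- The cross product on `ℝ³`. -/
def cross (u v : E3) : E3 :=
  (WithLp.equiv 2 (Fin 3 → ℝ)).symm
    (crossProduct ((WithLp.equiv 2 (Fin 3 → ℝ)) u) ((WithLp.equiv 2 (Fin 3 → ℝ)) v))

/-- `Φ(a₁,a₂,a₃) = ⟨a₁, a₂ × a₃⟩`. -/
def Phi (a : E3 × E3 × E3) : ℝ := ⟪a.1, cross a.2.1 a.2.2⟫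

/-- The five Casimir functions collected into a map `(ℝ³)³ → ℝ⁵`. -/
def casimir (a : E3 × E3 × E3) : Fin 5 → ℝ :=
  ![⟪a.1, a.2.1⟫, ⟪a.2.1, a.2.2⟫, ⟪a.2.2, a.1⟫,
    ‖a.1‖ ^ 2 - ‖a.2.1‖ ^ 2, ‖a.2.1‖ ^ 2 - ‖a.2.2‖ ^ 2]

/-- The vector field `V₀(a) = (a₂×a₃, a₃×a₁, a₁×a₂)`. -/
def V0 (a : E3 × E3 × E3) : E3 × E3 × E3 :=
  (cross a.2.1 a.2.2, cross a.2.2 a.1, cross a.1 a.2.1)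

/-- The vector field `V₁(a) = (0, a₂×a₁, a₃×a₁)`. -/
def V1 (a : E3 × E3 × E3) : E3 × E3 × E3 :=
  (0, cross a.2.1 a.1, cross a.2.2 a.1)

/-- The vector field `V₂(a) = (a₁×a₂, 0, a₃×a₂)`. -/
def V2 (a : E3 × E3 × E3) : E3 × E3 × E3 :=
  (cross a.1 a.2.1, 0, cross a.2.2 a.2.1)

/-- The vector field `V₃(a) = (a₁×a₃, a₂×a₃, 0)`. -/
def V3 (a : E3 × E3 × E3) : E3 × E3 × E3 :=
  (cross a.1 a.2.2, cross a.2.1 a.2.2, 0)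


/-- The triple `(a₁,a₂,a₃)` as a vector indexed by `Fin 3`. -/
def tre (a : E3 × E3 × E3) : Fin 3 → E3 := ![a.1, a.2.1, a.2.2]

/-- Right multiplication by a matrix: `(σ_O(a))_j = Σᵢ Oᵢⱼ aᵢ`. -/
def sigmaO (O : Matrix (Fin 3) (Fin 3) ℝ) (a : E3 × E3 × E3) : E3 × E3 × E3 :=
  (∑ i, O i 0 • tre a i, ∑ i, O i 1 • tre a i, ∑ i, O i 2 • tre a i)

/-- The leaf through `η`: the Casimir level set of `η` intersected with the set where
`Φ` has the same sign as `Φ(η)`. -/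
def leaf (η : E3 × E3 × E3) : Set (E3 × E3 × E3) :=
  {a | casimir a = casimir η ∧ Real.sign (Phi a) = Real.sign (Phi η)}

/-- The triple as a 3×3 matrix (rows are `a₁,a₂,a₃`). -/
def Ma (a : E3 × E3 × E3) : Matrix (Fin 3) (Fin 3) ℝ := Matrix.of fun i j => tre a i j

lemma phi_eq_det (a : E3 × E3 × E3) : Phi a = (Ma a).det := by
  rw [Matrix.det_fin_three]
  simp [Phi, cross, Ma, tre, cross_apply, PiLp.inner_apply, RCLike.inner_apply,
    Fin.sum_univ_three]
  ring

lemma tre_sigma (O : Matrix (Fin 3) (Fin 3) ℝ) (a : E3 × E3 × E3) (j : Fin 3) :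
    tre (sigmaO O a) j = ∑ i, O i j • tre a i := by
  fin_cases j <;> rfl

lemma Ma_sigma (O : Matrix (Fin 3) (Fin 3) ℝ) (a : E3 × E3 × E3) :
    Ma (sigmaO O a) = O.transpose * Ma a := by
  ext i j
  simp [Ma, tre_sigma, Matrix.mul_apply, Matrix.transpose_apply]

lemma phi_sigma (O : Matrix (Fin 3) (Fin 3) ℝ) (a : E3 × E3 × E3) :
    Phi (sigmaO O a) = O.det * Phi a := by
  rw [phi_eq_det, phi_eq_det, Ma_sigma, Matrix.det_mul, Matrix.det_transpose]

lemma sigma_comp (O P : Matrix (Fin 3) (Fin 3) ℝ) (a : E3 × E3 × E3) :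
    sigmaO P (sigmaO O a) = sigmaO (O * P) a := by
  have h : ∀ k : Fin 3, (∑ j, P j k • tre (sigmaO O a) j) = ∑ i, (O * P) i k • tre a i := by
    intro k
    simp only [tre_sigma, Finset.smul_sum, Matrix.mul_apply]
    rw [Finset.sum_comm]
    refine Finset.sum_congr rfl fun i _ => ?_
    rw [Finset.sum_smul]
    refine Finset.sum_congr rfl fun j _ => ?_
    rw [smul_smul, mul_comm]
  exact Prod.ext (h 0) (Prod.ext (h 1) (h 2))

lemma sigma_one (a : E3 × E3 × E3) : sigmaO 1 a = a := by
  have h : ∀ k : Fin 3, (∑ i, (1 : Matrix (Fin 3) (Fin 3) ℝ) i k • tre a i) = tre a k := by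
    intro k
    rw [Finset.sum_eq_single k]
    · simp [Matrix.one_apply]
    · intro i _ hik; simp [Matrix.one_apply, hik]
    · simp
  exact Prod.ext (h 0) (Prod.ext (h 1) (h 2))

lemma inner_sigma (O : Matrix (Fin 3) (Fin 3) ℝ) (a : E3 × E3 × E3) (i j : Fin 3) :
    ⟪tre (sigmaO O a) i, tre (sigmaO O a) j⟫
      = ∑ k, ∑ l, O k i * O l j * ⟪tre a k, tre a l⟫ := by
  rw [tre_sigma, tre_sigma, sum_inner]
  refine Finset.sum_congr rfl fun k _ => ?_
  rw [inner_sum]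
  refine Finset.sum_congr rfl fun l _ => ?_
  rw [real_inner_smul_left, real_inner_smul_right]; ring

lemma casimir_sigma (O : Matrix (Fin 3) (Fin 3) ℝ)
    (hO : O ∈ Matrix.orthogonalGroup (Fin 3) ℝ) {a η : E3 × E3 × E3}
    (h : casimir a = casimir η) : casimir (sigmaO O a) = casimir (sigmaO O η) := by
  have oo : ∀ i j : Fin 3, O 0 i * O 0 j + O 1 i * O 1 j + O 2 i * O 2 j
      = if i = j then 1 else 0 := by
    intro i j
    have hs : star O * O = 1 := (Matrix.mem_orthogonalGroup_iff' (Fin 3) ℝ).mp hO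
    have h2 := congrFun (congrFun hs i) j
    simpa [Matrix.mul_apply, Matrix.star_eq_conjTranspose, Matrix.conjTranspose_apply,
      Fin.sum_univ_three, Matrix.one_apply] using h2
  have o01 := oo 0 1; have o12 := oo 1 2; have o02 := oo 0 2
  have o00 := oo 0 0; have o11 := oo 1 1; have o22 := oo 2 2
  norm_num [Fin.ext_iff] at o01 o12 o02 o00 o11 o22
  set c : ℝ := ⟪a.1, a.1⟫ - ⟪η.1, η.1⟫ with hc
  have h0 := congrFun h 0; have h1 := congrFun h 1; have h2 := congrFun h 2
  have h3 := congrFun h 3; have h4 := congrFun h 4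
  simp only [casimir, Matrix.cons_val_zero, Matrix.cons_val_one, Matrix.head_cons,
    Matrix.cons_val_two, Matrix.tail_cons, Matrix.cons_val_three, Matrix.cons_val_four,
    ← real_inner_self_eq_norm_sq] at h0 h1 h2 h3 h4
  have hg : ∀ k l : Fin 3, ⟪tre a k, tre a l⟫
      = ⟪tre η k, tre η l⟫ + (if k = l then c else 0) := by
    intro k l
    fin_cases k <;> fin_cases l <;>
      simp only [tre, Matrix.cons_val_zero, Matrix.cons_val_one, Matrix.head_cons,
        Matrix.cons_val_two, Matrix.tail_cons, Fin.mk_one, Fin.zero_eta, Fin.isValue] <;>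
      norm_num [Fin.ext_iff, -PiLp.inner_apply] <;>
      linarith [h0, h1, h2, h3, h4, hc, real_inner_comm a.1 a.2.1,
        real_inner_comm η.1 η.2.1, real_inner_comm a.2.1 a.2.2,
        real_inner_comm η.2.1 η.2.2, real_inner_comm a.2.2 a.1,
        real_inner_comm η.2.2 η.1, real_inner_self_eq_norm_sq a.1, real_inner_self_eq_norm_sq η.1,
        real_inner_self_eq_norm_sq a.2.1, real_inner_self_eq_norm_sq η.2.1,
        real_inner_self_eq_norm_sq a.2.2, real_inner_self_eq_norm_sq η.2.2]
  have key : ∀ (i j : Fin 3) (r : ℝ),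
      (O 0 i * O 0 j + O 1 i * O 1 j + O 2 i * O 2 j = r) →
      ⟪tre (sigmaO O a) i, tre (sigmaO O a) j⟫
        = ⟪tre (sigmaO O η) i, tre (sigmaO O η) j⟫ + r * c := by
    intro i j r hr
    rw [inner_sigma, inner_sigma]
    simp only [Fin.sum_univ_three, hg]
    fin_cases i <;> fin_cases j <;>
      norm_num [Fin.ext_iff, -PiLp.inner_apply] at hr ⊢ <;>
      linear_combination c * hr
  have E0 : ⟪(sigmaO O a).1, (sigmaO O a).2.1⟫ = ⟪(sigmaO O η).1, (sigmaO O η).2.1⟫ := by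
    have hk : ⟪(sigmaO O a).1, (sigmaO O a).2.1⟫
        = ⟪(sigmaO O η).1, (sigmaO O η).2.1⟫ + 0 * c := key 0 1 0 o01
    rw [zero_mul, add_zero] at hk; exact hk
  have E1 : ⟪(sigmaO O a).2.1, (sigmaO O a).2.2⟫ = ⟪(sigmaO O η).2.1, (sigmaO O η).2.2⟫ := by
    have hk : ⟪(sigmaO O a).2.1, (sigmaO O a).2.2⟫
        = ⟪(sigmaO O η).2.1, (sigmaO O η).2.2⟫ + 0 * c := key 1 2 0 o12
    rw [zero_mul, add_zero] at hk; exact hk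
  have E2 : ⟪(sigmaO O a).2.2, (sigmaO O a).1⟫ = ⟪(sigmaO O η).2.2, (sigmaO O η).1⟫ := by
    have hk : ⟪(sigmaO O a).2.2, (sigmaO O a).1⟫
        = ⟪(sigmaO O η).2.2, (sigmaO O η).1⟫ + 0 * c :=
      key 2 0 0 (by linear_combination o02)
    rw [zero_mul, add_zero] at hk; exact hk
  have k0 : ⟪(sigmaO O a).1, (sigmaO O a).1⟫
      = ⟪(sigmaO O η).1, (sigmaO O η).1⟫ + 1 * c := key 0 0 1 o00
  have k1 : ⟪(sigmaO O a).2.1, (sigmaO O a).2.1⟫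
      = ⟪(sigmaO O η).2.1, (sigmaO O η).2.1⟫ + 1 * c := key 1 1 1 o11
  have k2 : ⟪(sigmaO O a).2.2, (sigmaO O a).2.2⟫
      = ⟪(sigmaO O η).2.2, (sigmaO O η).2.2⟫ + 1 * c := key 2 2 1 o22
  rw [real_inner_self_eq_norm_sq, real_inner_self_eq_norm_sq] at k0 k1 k2
  have E3 : ‖(sigmaO O a).1‖ ^ 2 - ‖(sigmaO O a).2.1‖ ^ 2
      = ‖(sigmaO O η).1‖ ^ 2 - ‖(sigmaO O η).2.1‖ ^ 2 := by linarith
  have E4 : ‖(sigmaO O a).2.1‖ ^ 2 - ‖(sigmaO O a).2.2‖ ^ 2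
      = ‖(sigmaO O η).2.1‖ ^ 2 - ‖(sigmaO O η).2.2‖ ^ 2 := by linarith
  show (![_, _, _, _, _] : Fin 5 → ℝ) = ![_, _, _, _, _]
  rw [E0, E1, E2, E3, E4]

lemma mapsTo_leaf (O : Matrix (Fin 3) (Fin 3) ℝ)
    (hO : O ∈ Matrix.orthogonalGroup (Fin 3) ℝ) (η : E3 × E3 × E3) :
    Set.MapsTo (sigmaO O) (leaf η) (leaf (sigmaO O η)) := by
  have hdet : O.det = 1 ∨ O.det = -1 := by
    have hs : star O * O = 1 := (Matrix.mem_orthogonalGroup_iff' (Fin 3) ℝ).mp hO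
    have := congrArg Matrix.det hs
    rw [Matrix.det_mul, Matrix.star_eq_conjTranspose] at this
    simp only [Matrix.det_conjTranspose, Matrix.det_one] at this
    exact mul_self_eq_one_iff.mp (by simpa using this)
  intro a ha
  refine ⟨casimir_sigma O hO ha.1, ?_⟩
  rw [phi_sigma, phi_sigma]
  rcases hdet with hd | hd
  · rw [hd, one_mul, one_mul]; exact ha.2
  · rw [hd]
    simp only [neg_one_mul, Real.sign_neg]
    rw [ha.2]

theorem sigmaO_phi_and_bijOn_leaf (O : Matrix (Fin 3) (Fin 3) ℝ)
    (hO : O ∈ Matrix.orthogonalGroup (Fin 3) ℝ) :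
    (∀ a : E3 × E3 × E3, Phi (sigmaO O a) = O.det * Phi a) ∧
    (∀ η : E3 × E3 × E3, Phi η ≠ 0 →
      Set.BijOn (sigmaO O) (leaf η) (leaf (sigmaO O η))) := by
  refine ⟨phi_sigma O, fun η _ => ?_⟩
  have h1 : O * star O = 1 := (Matrix.mem_orthogonalGroup_iff (Fin 3) ℝ).mp hO
  have h2 : star O * O = 1 := (Matrix.mem_orthogonalGroup_iff' (Fin 3) ℝ).mp hO
  have hOt : O.transpose ∈ Matrix.orthogonalGroup (Fin 3) ℝ := by
    rw [Matrix.mem_orthogonalGroup_iff]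
    simpa [Matrix.star_eq_conjTranspose, Matrix.conjTranspose_eq_transpose_of_trivial] using h2
  have hOOt : O * O.transpose = 1 := by
    simpa [Matrix.star_eq_conjTranspose, Matrix.conjTranspose_eq_transpose_of_trivial] using h1
  have hOtO : O.transpose * O = 1 := by
    simpa [Matrix.star_eq_conjTranspose, Matrix.conjTranspose_eq_transpose_of_trivial] using h2
  have inv1 : ∀ x : E3 × E3 × E3, sigmaO O.transpose (sigmaO O x) = x := by
    intro x; rw [sigma_comp, hOOt, sigma_one]
  have inv2 : ∀ x : E3 × E3 × E3, sigmaO O (sigmaO O.transpose x) = x := by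
    intro x; rw [sigma_comp, hOtO, sigma_one]
  refine Set.InvOn.bijOn ⟨fun x _ => inv1 x, fun x _ => inv2 x⟩
    (mapsTo_leaf O hO η) ?_
  have := mapsTo_leaf O.transpose hOt (sigmaO O η)
  rwa [inv1 η] at this

end
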